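/- The set H = {(c, e, h) ∈ ℝ³ × ℝ³ × ℝ : c · e = 0 and 2h‖c‖² − κ⁴(‖e‖² − 1) = 0}, for a fixed constant κ > 0, is not homeomorphic to ℝ⁵. -/

import Mathlib

noncomputable abbrev E3 := EuclideanSpace ℝ (Fin 3)

/-- The space of all Keplerian orbits, as a subspace of ℝ⁷. -/
def Hall (κ : ℝ) : Set (E3 × E3 × ℝ) :=
  {x | inner ℝ x.1 x.2.1 = (0 : ℝ) ∧ 2 * x.2.2 * ‖x.1‖ ^ 2 - κ ^ 4 * (‖x.2.1‖ ^ 2 - 1) = 0}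

/-!
A continuous surjection `f : E → ℝ` on a proper real normed space of dimension at least two
cannot have a compact fibre `f ⁻¹' {a}`: that fibre lies in a ball whose complement is connected
and, by surjectivity, contains points with `f < a` and points with `f > a`, so the intermediate
value theorem produces a point of the fibre outside the ball. The energy `h` on the space of
Keplerian orbits is such a map (every value is taken by an orbit with `c = 0`, `‖e‖ = 1`), whose
level set `h = -1` is compact.
-/

section NormedSpace

variable {E : Type*} [NormedAddCommGroup E] [NormedSpace ℝ E]

theorem isConnected_setOf_lt_norm (h : 1 < Module.rank ℝ E) {R : ℝ} (hR : 0 ≤ R) :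
    IsConnected {x : E | R < ‖x‖} := by
  have himage : (fun p : E × ℝ => p.2 • p.1) '' (Metric.sphere 0 1 ×ˢ Set.Ioi R) =
      {x : E | R < ‖x‖} := by
    ext x
    constructor
    · rintro ⟨⟨v, t⟩, ⟨hv, ht⟩, rfl⟩
      rw [mem_sphere_zero_iff_norm] at hv
      simpa [norm_smul, hv, abs_of_pos (hR.trans_lt ht)] using ht
    · intro hx
      have hx0 : ‖x‖ ≠ 0 := (hR.trans_lt hx).ne'
      refine ⟨(‖x‖⁻¹ • x, ‖x‖), ⟨?_, hx⟩, ?_⟩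
      · simp [norm_smul, hx0]
      · simp [smul_smul, hx0]
  rw [← himage]
  exact ((isConnected_sphere h 0 zero_le_one).prod isConnected_Ioi).image _
    (continuous_snd.smul continuous_fst).continuousOn

variable [ProperSpace E]

theorem not_isCompact_preimage_singleton_of_surjective (h : 1 < Module.rank ℝ E) {f : E → ℝ}
    (hf : Continuous f) (hsurj : Function.Surjective f) (a : ℝ) :
    ¬ IsCompact (f ⁻¹' {a}) := by
  intro hK
  obtain ⟨R, hR, hKR⟩ := hK.isBounded.subset_closedBall_lt 0 0
  obtain ⟨M, hM⟩ :=
    ((isCompact_closedBall (0 : E) R).image hf).isBounded.subset_closedBall 0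
  have hf_le : ∀ x : E, ‖x‖ ≤ R → |f x| ≤ M := fun x hx => by
    simpa using hM ⟨x, by simpa using hx, rfl⟩
  have hmem : ∀ t : ℝ, M < |t| → ∃ x ∈ {x : E | R < ‖x‖}, f x = t := fun t ht => by
    obtain ⟨x, rfl⟩ := hsurj t
    exact ⟨x, lt_of_not_ge fun hx => (hf_le x hx).not_gt ht, rfl⟩
  obtain ⟨k, hk⟩ := hsurj a
  have ha : |a| ≤ M := hk ▸ hf_le k (by simpa using hKR (show k ∈ f ⁻¹' {a} from hk))
  obtain ⟨x, hx, hfx⟩ := hmem (-(M + 1)) (by rw [abs_neg, abs_of_pos] <;> linarith [abs_nonneg a])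
  obtain ⟨y, hy, hfy⟩ := hmem (M + 1) (by rw [abs_of_pos] <;> linarith [abs_nonneg a])
  obtain ⟨z, hz, hfz⟩ := (isConnected_setOf_lt_norm h hR.le).isPreconnected.intermediate_value
    hx hy hf.continuousOn (show a ∈ Set.Icc (f x) (f y) by
      rw [hfx, hfy]; constructor <;> linarith [neg_abs_le a, le_abs_self a])
  exact hz.not_ge (by simpa using hKR (show z ∈ f ⁻¹' {a} from hfz))

end NormedSpace

theorem isClosed_Hall (κ : ℝ) : IsClosed (Hall κ) :=
  (isClosed_eq (by fun_prop) continuous_const).inter (isClosed_eq (by fun_prop) continuous_const)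

theorem isCompact_Hall_inter_setOf_energy_eq_neg_one {κ : ℝ} (hκ : κ ≠ 0) :
    IsCompact (Hall κ ∩ {x | x.2.2 = -1}) := by
  refine ((isCompact_closedBall (0 : E3) (κ ^ 2)).prod
    ((isCompact_closedBall (0 : E3) 1).prod (isCompact_singleton (x := (-1 : ℝ))))).of_isClosed_subset
    ((isClosed_Hall κ).inter (isClosed_eq (by fun_prop) continuous_const)) ?_
  rintro ⟨c, e, h⟩ ⟨⟨-, hH⟩, rfl : h = -1⟩
  have hκ4 : 0 < κ ^ 4 := by positivity
  have hc : ‖c‖ ^ 2 ≤ (κ ^ 2) ^ 2 := by nlinarith [sq_nonneg ‖e‖]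
  have he : ‖e‖ ^ 2 ≤ 1 ^ 2 := by nlinarith [sq_nonneg ‖c‖]
  simp only [Set.mem_prod, mem_closedBall_zero_iff, Set.mem_singleton_iff, and_true]
  exact ⟨abs_le_of_sq_le_sq' hc (by positivity) |>.2, abs_le_of_sq_le_sq' he zero_le_one |>.2⟩

theorem zero_single_mem_Hall (κ t : ℝ) : ((0 : E3), EuclideanSpace.single 0 1, t) ∈ Hall κ := by
  simp [Hall]

theorem stmt7 (κ : ℝ) (hκ : 0 < κ) :
    ¬ Nonempty (Hall κ ≃ₜ EuclideanSpace ℝ (Fin 5)) := by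
  rintro ⟨φ⟩
  let energy : Hall κ → ℝ := fun p => p.1.2.2
  have henergy : Function.Surjective energy := fun t => ⟨⟨_, zero_single_mem_Hall κ t⟩, rfl⟩
  have hlevel : IsCompact (energy ⁻¹' {-1}) := by
    rw [Topology.IsEmbedding.subtypeVal.isCompact_iff,
      show energy ⁻¹' {-1} = Subtype.val ⁻¹' {x | x.2.2 = -1} from rfl, Subtype.image_preimage_coe]
    exact isCompact_Hall_inter_setOf_energy_eq_neg_one hκ.ne'
  refine not_isCompact_preimage_singleton_of_surjective (f := energy ∘ φ.symm)
    (by rw [← Module.finrank_eq_rank, finrank_euclideanSpace_fin]; norm_num)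
    (by fun_prop) (henergy.comp φ.symm.surjective) (-1) ?_
  rw [Set.preimage_comp, Homeomorph.preimage_symm]
  exact hlevel.image φ.continuous
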